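/- arXiv:2407.16022 — 4 statements merged into one kernel-verified Lean document; each statement's English description precedes it below -/
import Mathlib

section
/- Let a ∈ V^k and b ∈ W^{k'} be tuples over sets V and W. Then stp(a,a) = stp(b,b) if and only if there exists a bijection π from the set S(a) of slices of a to the set S(b) of slices of b such that stp(a,s) = stp(b,π(s)) for all slices s of a. -/
/-!
If `stp(a,a) = stp(b,b)`, then `a` and `b` have the same length and `a_i ↦ b_i` is a well-defined
injective map `f` with `b = map f a`. Mapping slices by `f` is a bijection from `S(a)` onto `S(b)`,
and `f` preserves every similarity type between lists of elements of `a`.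

Conversely, the similarity type `stp(a, s)` of a slice `s` of `a` determines the length of `s`.
Hence the image of a singleton slice `[a_i]` is a singleton `[w]`, and comparing `stp(a, [a_i])`
with `stp(b, [w])` shows `a_i = a_j → b_i = b_j`. Surjectivity gives the reverse implication.
-/

/-- The similarity type of two tuples (represented as lists). -/
def stpL {V : Type*} (x y : List V) : Set (ℕ × ℕ) :=
  {p | ∃ (h1 : p.1 < x.length) (h2 : p.2 < y.length), x.get ⟨p.1, h1⟩ = y.get ⟨p.2, h2⟩}

/-- `s` is a slice of `t`: nonempty, pairwise distinct entries, entries among those of `t`. -/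
def sliceOf {V : Type*} (s t : List V) : Prop :=
  s ≠ [] ∧ s.Nodup ∧ ∀ x ∈ s, x ∈ t

theorem List.exists_subset_map_eq {α β : Type*} {f : α → β} {l : List α} :
    ∀ {t : List β}, t ⊆ l.map f → ∃ s ⊆ l, s.map f = t
  | [], _ => ⟨[], List.nil_subset l, rfl⟩
  | w :: t, h => by
    obtain ⟨v, hv, rfl⟩ := List.mem_map.1 (h List.mem_cons_self)
    obtain ⟨s, hs, rfl⟩ := List.exists_subset_map_eq (List.subset_of_cons_subset h)
    exact ⟨v :: s, List.cons_subset.2 ⟨hv, hs⟩, rfl⟩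

theorem List.eq_of_map_eq_map_of_injOn {α β : Type*} {f : α → β} {S : Set α}
    (hf : Set.InjOn f S) {s t : List α} (hs : ∀ x ∈ s, x ∈ S) (ht : ∀ x ∈ t, x ∈ S)
    (h : s.map f = t.map f) : s = t := by
  have hlen : s.length = t.length := by simpa using congrArg List.length h
  refine List.ext_getElem hlen fun i hi hi' =>
    hf (hs _ (s.getElem_mem hi)) (ht _ (t.getElem_mem hi')) ?_
  simpa [hi, hi'] using congrArg (·[i]?) h

section Stp

variable {V W : Type*}

@[simp]
theorem mem_stpL {x y : List V} {i j : ℕ} :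
    (i, j) ∈ stpL x y ↔ ∃ (hi : i < x.length) (hj : j < y.length), x[i] = y[j] :=
  Iff.rfl

theorem lt_length_iff_exists_mem_stpL {a s : List V} (hs : s ⊆ a) {n : ℕ} :
    n < s.length ↔ ∃ m, (m, n) ∈ stpL a s :=
  ⟨fun hn => by
    obtain ⟨m, hm, hmn⟩ := List.getElem_of_mem (hs (s.getElem_mem hn))
    exact ⟨m, hm, hn, hmn⟩, fun ⟨_, _, hn, _⟩ => hn⟩

theorem length_eq_of_stpL_eq {a s : List V} {b t : List W} (hs : s ⊆ a) (ht : t ⊆ b)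
    (h : stpL a s = stpL b t) : s.length = t.length := by
  have hlt : ∀ n, n < s.length ↔ n < t.length := fun n => by
    rw [lt_length_iff_exists_mem_stpL hs, lt_length_iff_exists_mem_stpL ht, h]
  rcases Nat.lt_trichotomy s.length t.length with hst | hst | hst
  · exact absurd ((hlt _).2 hst) (lt_irrefl _)
  · exact hst
  · exact absurd ((hlt _).1 hst) (lt_irrefl _)

theorem length_eq_of_stpL_self_eq {a : List V} {b : List W} (h : stpL a a = stpL b b) :
    a.length = b.length :=
  length_eq_of_stpL_eq (List.Subset.refl a) (List.Subset.refl b) h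

theorem stpL_map_map {f : V → W} {S : Set V} (hf : Set.InjOn f S) {x y : List V}
    (hx : ∀ v ∈ x, v ∈ S) (hy : ∀ v ∈ y, v ∈ S) :
    stpL (x.map f) (y.map f) = stpL x y := by
  ext ⟨i, j⟩
  simp only [mem_stpL, List.length_map, List.getElem_map]
  exact exists_congr fun hi => exists_congr fun hj =>
    hf.eq_iff (hx _ (x.getElem_mem hi)) (hy _ (y.getElem_mem hj))

/-- The map is `v ↦ b[a.idxOf v]`; equality of the self-similarity types makes it well defined
and injective. -/
theorem exists_injOn_map_eq_of_stpL_self_eq [Nonempty W] {a : List V} {b : List W}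
    (h : stpL a a = stpL b b) : ∃ f : V → W, Set.InjOn f {v | v ∈ a} ∧ a.map f = b := by
  classical
  have hlen := length_eq_of_stpL_self_eq h
  have hidx : ∀ v ∈ a, a.idxOf v < b.length := fun v hv =>
    hlen ▸ List.idxOf_lt_length_iff.2 hv
  have hget : ∀ v (hv : v ∈ a), a[a.idxOf v]'(List.idxOf_lt_length_iff.2 hv) = v := fun v hv =>
    List.getElem_idxOf _
  refine ⟨fun v => b.getD (a.idxOf v) (Classical.arbitrary W), fun v hv w hw hvw => ?_, ?_⟩
  · simp only [List.getD_eq_getElem _ _ (hidx v hv), List.getD_eq_getElem _ _ (hidx w hw)] at hvw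
    have hvw' : (a.idxOf v, a.idxOf w) ∈ stpL b b := mem_stpL.2 ⟨hidx v hv, hidx w hw, hvw⟩
    obtain ⟨_, _, heq⟩ := mem_stpL.1 (h ▸ hvw')
    rwa [hget v hv, hget w hw] at heq
  · refine List.ext_getElem (by simp [hlen]) fun i hi hi' => ?_
    have hai : a[i] ∈ a := a.getElem_mem _
    simp only [List.getElem_map, List.getD_eq_getElem _ _ (hidx _ hai)]
    have hai' : (a.idxOf a[i], i) ∈ stpL a a := mem_stpL.2 ⟨_, _, hget _ hai⟩
    exact (mem_stpL.1 (h ▸ hai')).2.2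

end Stp

namespace sliceOf

variable {V W : Type*}

theorem singleton {a : List V} {v : V} (hv : v ∈ a) : sliceOf [v] a :=
  ⟨List.cons_ne_nil _ _, List.nodup_singleton v, by simpa using hv⟩

theorem not_nil {s : List V} : ¬ sliceOf s [] := fun ⟨hne, _, hs⟩ => by
  obtain ⟨v, hv⟩ := List.exists_mem_of_ne_nil s hne
  exact List.not_mem_nil (hs v hv)

theorem map {a s : List V} {f : V → W} (hf : Set.InjOn f {v | v ∈ a}) (hs : sliceOf s a) :
    sliceOf (s.map f) (a.map f) :=
  ⟨by simpa using hs.1,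
    hs.2.1.map_on fun x hx y hy hxy => hf (hs.2.2 x hx) (hs.2.2 y hy) hxy,
    List.map_subset f hs.2.2⟩

end sliceOf

section SliceMap

variable {V W : Type*}

def sliceMap {a : List V} {f : V → W} (hf : Set.InjOn f {v | v ∈ a}) :
    {s // sliceOf s a} → {t // sliceOf t (a.map f)} :=
  fun s => ⟨s.1.map f, s.2.map hf⟩

theorem sliceMap_bijective {a : List V} {f : V → W} (hf : Set.InjOn f {v | v ∈ a}) :
    Function.Bijective (sliceMap hf) := by
  refine ⟨fun s s' hss' => Subtype.ext ?_, fun t => ?_⟩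
  · exact List.eq_of_map_eq_map_of_injOn hf s.2.2.2 s'.2.2.2 (congrArg Subtype.val hss')
  · obtain ⟨t, ht⟩ := t
    obtain ⟨s, hsa, rfl⟩ := List.exists_subset_map_eq ht.2.2
    refine ⟨⟨s, ?_, ht.2.1.of_map f, hsa⟩, rfl⟩
    rintro rfl
    exact ht.1 rfl

theorem stpL_sliceMap {a : List V} {f : V → W} (hf : Set.InjOn f {v | v ∈ a})
    (s : {s // sliceOf s a}) : stpL (a.map f) (sliceMap hf s).1 = stpL a s.1 :=
  stpL_map_map hf (fun _ => id) s.2.2.2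

end SliceMap

theorem stpL_self_subset_of_forall_slice {V W : Type*} {a : List V} {b : List W}
    (h : ∀ s, sliceOf s a → ∃ t, sliceOf t b ∧ stpL a s = stpL b t) :
    stpL a a ⊆ stpL b b := by
  rintro ⟨i, j⟩ hij
  obtain ⟨hi, hj, hij⟩ := mem_stpL.1 hij
  obtain ⟨t, ht, hst⟩ := h _ (sliceOf.singleton (a.getElem_mem hi))
  obtain ⟨w, rfl⟩ := List.length_eq_one_iff.1
    (length_eq_of_stpL_eq (sliceOf.singleton (a.getElem_mem hi)).2.2 ht.2.2 hst).symm
  have hmem : ∀ k (hk : k < a.length), a[k] = a[i] → ∃ hk' : k < b.length, b[k] = w := by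
    intro k hk hki
    have hk0 : (k, 0) ∈ stpL a [a[i]] := mem_stpL.2 ⟨hk, by simp, by simpa using hki⟩
    obtain ⟨hk', _, hkw⟩ := mem_stpL.1 (hst ▸ hk0)
    exact ⟨hk', by simpa using hkw⟩
  obtain ⟨hi', hiw⟩ := hmem i hi rfl
  obtain ⟨hj', hjw⟩ := hmem j hj hij.symm
  exact ⟨hi', hj', hiw.trans hjw.symm⟩

theorem stmt5 {V W : Type*} (a : List V) (b : List W) :
    stpL a a = stpL b b ↔
      ∃ π : {s : List V // sliceOf s a} → {t : List W // sliceOf t b},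
        Function.Bijective π ∧ ∀ s, stpL a s.val = stpL b (π s).val := by
  constructor
  · intro h
    by_cases hb : b = []
    · subst hb
      have ha : a = [] := List.length_eq_zero_iff.1 (length_eq_of_stpL_self_eq h)
      subst ha
      exact ⟨fun s => (sliceOf.not_nil s.2).elim,
        ⟨fun s => (sliceOf.not_nil s.2).elim, fun t => (sliceOf.not_nil t.2).elim⟩,
        fun s => (sliceOf.not_nil s.2).elim⟩
    obtain ⟨w, -⟩ := List.exists_mem_of_ne_nil b hb
    have : Nonempty W := ⟨w⟩
    obtain ⟨f, hf, rfl⟩ := exists_injOn_map_eq_of_stpL_self_eq h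
    exact ⟨sliceMap hf, sliceMap_bijective hf, fun s => (stpL_sliceMap hf s).symm⟩
  · rintro ⟨π, ⟨-, hsurj⟩, hπ⟩
    refine le_antisymm
      (stpL_self_subset_of_forall_slice fun s hs => ⟨_, (π ⟨s, hs⟩).2, hπ ⟨s, hs⟩⟩)
      (stpL_self_subset_of_forall_slice fun t ht => ?_)
    obtain ⟨s, hs⟩ := hsurj ⟨t, ht⟩
    exact ⟨s.1, s.2, by rw [hπ s, hs]⟩
end

section
/- Let A be a σ-structure with maximum relation arity k := ar(σ) and tuple set τ(A). Then the efficient colored multigraph representation Ĝ(A) satisfies |V(Ĝ(A))| ≤ (1 + k·k!)·|τ(A)| and, for all i,j ∈ [k], |E_{i,j}^{Ĝ(A)}| ≤ 2·k·k!·|τ(A)|; hence the total number of edges of Ĝ(A) is at most 2·k³·k!·|τ(A)|. -/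
/-- A relational structure over signature `S` with universe `V`. -/
structure Struct (S : Type*) (V : Type*) where
  rel : S → Set (List V)

/-- The set of all tuples occurring in some relation of the structure. -/
def Struct.tuples {S V : Type*} (A : Struct S V) : Set (List V) := ⋃ R, A.rel R

/-- The set `S(τ(A))` of all slices of tuples of `A`. -/
def slicesOf {S V : Type*} (A : Struct S V) : Set (List V) :=
  {s | ∃ t ∈ A.tuples, sliceOf s t}

/-- The universe of the efficient representation `Ĝ(A)`: a node `w_a` (left) for each
tuple `a` and a node `v_s` (right) for each slice `s`. -/
def hatUniv {S V : Type*} (A : Struct S V) : Set (List V ⊕ List V) :=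
  (Sum.inl '' A.tuples) ∪ (Sum.inr '' slicesOf A)

/-- The edge relation `E_{i,j}` of `Ĝ(A)`. -/
def hatE {S V : Type*} (A : Struct S V) (i j : ℕ) :
    Set ((List V ⊕ List V) × (List V ⊕ List V)) :=
  {p | (∃ a s, p = (Sum.inl a, Sum.inr s) ∧ a ∈ A.tuples ∧ sliceOf s a ∧ (i, j) ∈ stpL a s) ∨
       (∃ s b, p = (Sum.inr s, Sum.inl b) ∧ b ∈ A.tuples ∧ sliceOf s b ∧ (i, j) ∈ stpL s b)}

/-!
Every node `v_s` and every edge of `Ĝ(A)` comes from a pair `(a, s)` with `a ∈ τ(A)` and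
`s ∈ S(a)`, each pair giving one node and at most two edges of each colour. A tuple of length at
most `k` has at most `k · k!` slices: completing a slice `s` to an ordering `s ++ u` of the
distinct entries of the tuple determines `s` by its length in `[1, k]` and a permutation of at
most `k` elements.
-/

namespace List

variable {V : Type*}

lemma exists_append_perm_dedup_of_sliceOf [DecidableEq V] {s t : List V} (hs : sliceOf s t) :
    ∃ u, s ++ u ~ t.dedup := by
  obtain ⟨l, hls, hl⟩ := hs.2.1.subperm fun x hx => mem_dedup.2 (hs.2.2 x hx)
  obtain ⟨u, hu⟩ := hl.exists_perm_append
  exact ⟨u, (hls.symm.append_right u).trans hu.symm⟩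

lemma finite_setOf_sliceOf_and_ncard_le {t : List V} {n : ℕ} (hn : t.length ≤ n) :
    {s | sliceOf s t}.Finite ∧ {s | sliceOf s t}.ncard ≤ n * n.factorial := by
  classical
  choose! u hu using fun s (hs : sliceOf s t) => exists_append_perm_dedup_of_sliceOf hs
  let target : Finset (ℕ × List V) := Finset.Icc 1 n ×ˢ t.dedup.permutations.toFinset
  have hmaps : ∀ s ∈ {s | sliceOf s t}, (s.length, s ++ u s) ∈ (target : Set (ℕ × List V)) := by
    intro s hs
    have hlen : s.length ≤ n := calc
      s.length ≤ (s ++ u s).length := by simp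
      _ = t.dedup.length := (hu s hs).length_eq
      _ ≤ n := (dedup_sublist t).length_le.trans hn
    simpa [target, Nat.one_le_iff_ne_zero, hs.1, hlen] using hu s hs
  have hinj : Set.InjOn (fun s => (s.length, s ++ u s)) {s | sliceOf s t} := by
    intro s _ s' _ h
    simp only [Prod.mk.injEq] at h
    exact (append_inj h.2 h.1).1
  have hcard : target.card ≤ n * n.factorial := by
    rw [Finset.card_product, Nat.card_Icc, Nat.add_sub_cancel]
    refine Nat.mul_le_mul_left n ((toFinset_card_le _).trans ?_)
    rw [length_permutations]
    exact Nat.factorial_le ((dedup_sublist t).length_le.trans hn)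
  refine ⟨.of_injOn hmaps hinj target.finite_toSet, ?_⟩
  calc {s | sliceOf s t}.ncard ≤ (target : Set (ℕ × List V)).ncard :=
        Set.ncard_le_ncard_of_injOn _ hmaps hinj target.finite_toSet
    _ ≤ n * n.factorial := by rwa [Set.ncard_coe_finset]

end List

lemma Set.ncard_biUnion_le_mul {α β : Type*} {T : Set α} (hT : T.Finite) {F : α → Set β} {m : ℕ}
    (hF : ∀ a ∈ T, (F a).ncard ≤ m) : (⋃ a ∈ T, F a).ncard ≤ T.ncard * m := by
  calc (⋃ a ∈ T, F a).ncard ≤ ∑ a ∈ hT.toFinset, (F a).ncard := by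
        simpa using hT.toFinset.set_ncard_biUnion_le F
    _ ≤ hT.toFinset.card • m := Finset.sum_le_card_nsmul _ _ _ fun a ha => hF a (by simpa using ha)
    _ = T.ncard * m := by rw [smul_eq_mul, Set.ncard_eq_toFinset_card T hT]

namespace Struct

variable {S V : Type*} (A : Struct S V)

def tupleSlicePairs : Set (List V × List V) := {p | p.1 ∈ A.tuples ∧ sliceOf p.2 p.1}

lemma tupleSlicePairs_eq_biUnion :
    A.tupleSlicePairs = ⋃ a ∈ A.tuples, Prod.mk a '' {s | sliceOf s a} := by
  ext ⟨a, s⟩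
  simp [tupleSlicePairs, and_comm]

variable {A}

lemma finite_tupleSlicePairs_and_ncard_le (hfin : A.tuples.Finite) {n : ℕ}
    (hn : ∀ t ∈ A.tuples, t.length ≤ n) :
    A.tupleSlicePairs.Finite ∧ A.tupleSlicePairs.ncard ≤ A.tuples.ncard * (n * n.factorial) := by
  have hslices a (ha : a ∈ A.tuples) := List.finite_setOf_sliceOf_and_ncard_le (hn a ha)
  rw [tupleSlicePairs_eq_biUnion]
  refine ⟨hfin.biUnion fun a ha => (hslices a ha).1.image _, Set.ncard_biUnion_le_mul hfin ?_⟩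
  intro a ha
  rw [Set.ncard_image_of_injective _ (Prod.mk_right_injective a)]
  exact (hslices a ha).2

lemma slicesOf_eq_image_snd : slicesOf A = Prod.snd '' A.tupleSlicePairs := by
  ext s
  simp [slicesOf, tupleSlicePairs]

lemma ncard_hatUniv_le (hP : A.tupleSlicePairs.Finite) :
    (hatUniv A).ncard ≤ A.tuples.ncard + A.tupleSlicePairs.ncard := by
  calc (hatUniv A).ncard
      ≤ (Sum.inl '' A.tuples : Set (List V ⊕ List V)).ncard
        + (Sum.inr '' slicesOf A : Set (List V ⊕ List V)).ncard := Set.ncard_union_le _ _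
    _ = A.tuples.ncard + (slicesOf A).ncard := by
        rw [Set.ncard_image_of_injective _ Sum.inl_injective,
          Set.ncard_image_of_injective _ Sum.inr_injective]
    _ ≤ A.tuples.ncard + A.tupleSlicePairs.ncard := by
        rw [slicesOf_eq_image_snd]
        exact Nat.add_le_add_left (Set.ncard_image_le hP) _

lemma hatE_subset (i j : ℕ) :
    hatE A i j ⊆ (fun p => (Sum.inl p.1, Sum.inr p.2)) '' A.tupleSlicePairs ∪
      (fun p => (Sum.inr p.2, Sum.inl p.1)) '' A.tupleSlicePairs := by
  rintro _ (⟨a, s, rfl, ha, hs, -⟩ | ⟨s, b, rfl, hb, hs, -⟩)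
  · exact Or.inl ⟨(a, s), ⟨ha, hs⟩, rfl⟩
  · exact Or.inr ⟨(b, s), ⟨hb, hs⟩, rfl⟩

lemma ncard_hatE_le (hP : A.tupleSlicePairs.Finite) (i j : ℕ) :
    (hatE A i j).ncard ≤ 2 * A.tupleSlicePairs.ncard := by
  calc (hatE A i j).ncard
      ≤ ((fun p => (Sum.inl p.1, Sum.inr p.2)) '' A.tupleSlicePairs ∪
          (fun p => (Sum.inr p.2, Sum.inl p.1)) '' A.tupleSlicePairs).ncard :=
        Set.ncard_le_ncard (hatE_subset i j) ((hP.image _).union (hP.image _))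
    _ ≤ A.tupleSlicePairs.ncard + A.tupleSlicePairs.ncard := by
        refine (Set.ncard_union_le _ _).trans_eq ?_
        rw [Set.ncard_image_of_injective _ fun p q h => by simpa [Prod.ext_iff] using h,
          Set.ncard_image_of_injective _ fun p q h => by simpa [Prod.ext_iff, and_comm] using h]
    _ = 2 * A.tupleSlicePairs.ncard := by ring

end Struct

/-- Size bounds for the efficient representation `Ĝ(A)`, where `k` is the maximum
arity of the signature: `|V(Ĝ(A))| ≤ (1 + k·k!)·|τ(A)|`, each edge relation has
at most `2·k·k!·|τ(A)|` edges, and the total number of edges is at most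
`2·k³·k!·|τ(A)|`. -/
theorem stmt14 {S V : Type*} [Fintype S] (ar : S → ℕ) (A : Struct S V)
    (hlen : ∀ R, ∀ t ∈ A.rel R, t.length = ar R)
    (hFin : A.tuples.Finite)
    (k : ℕ) (hk : k = Finset.univ.sup ar) :
    (hatUniv A).ncard ≤ (1 + k * k.factorial) * A.tuples.ncard ∧
    (∀ i j : ℕ, i < k → j < k →
      (hatE A i j).ncard ≤ 2 * k * k.factorial * A.tuples.ncard) ∧
    (∑ i ∈ Finset.range k, ∑ j ∈ Finset.range k, (hatE A i j).ncard)
      ≤ 2 * k ^ 3 * k.factorial * A.tuples.ncard := by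
  have hlen_le : ∀ t ∈ A.tuples, t.length ≤ k := by
    rintro t ⟨_, ⟨R, rfl⟩, hR⟩
    exact (hlen R t hR).trans_le (hk ▸ Finset.le_sup (Finset.mem_univ R))
  obtain ⟨hPfin, hP⟩ := Struct.finite_tupleSlicePairs_and_ncard_le hFin hlen_le
  have hE : ∀ i j, (hatE A i j).ncard ≤ 2 * k * k.factorial * A.tuples.ncard := fun i j =>
    calc (hatE A i j).ncard ≤ 2 * A.tupleSlicePairs.ncard := Struct.ncard_hatE_le hPfin i j
      _ ≤ 2 * (A.tuples.ncard * (k * k.factorial)) := by gcongr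
      _ = 2 * k * k.factorial * A.tuples.ncard := by ring
  refine ⟨?_, fun i j _ _ => hE i j, ?_⟩
  · calc (hatUniv A).ncard ≤ A.tuples.ncard + A.tupleSlicePairs.ncard :=
          Struct.ncard_hatUniv_le hPfin
      _ ≤ A.tuples.ncard + A.tuples.ncard * (k * k.factorial) := by gcongr
      _ = (1 + k * k.factorial) * A.tuples.ncard := by ring
  · calc ∑ i ∈ Finset.range k, ∑ j ∈ Finset.range k, (hatE A i j).ncard
        ≤ ∑ _i ∈ Finset.range k, ∑ _j ∈ Finset.range k, 2 * k * k.factorial * A.tuples.ncard :=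
          Finset.sum_le_sum fun i _ => Finset.sum_le_sum fun j _ => hE i j
      _ = 2 * k ^ 3 * k.factorial * A.tuples.ncard := by
          simp only [Finset.sum_const, Finset.card_range, smul_eq_mul]
          ring
end

section
/- Let A be a σ-structure, f : τ(A) → C any coloring of its tuples, and let a, b ∈ τ(A) satisfy f(a) = f(b) and stp(a,a) = stp(b,b), with π_S : S(a) → S(b) the unique bijection satisfying stp(a,s) = stp(b,π_S(s)) for all slices s of a. Then the following are equivalent: (1) the multisets {{(stp(a,c), f(c)) : c ∈ N(a)}} and {{(stp(b,c), f(c)) : c ∈ N(b)}} are equal, where N(x) := {c ∈ τ(A) : stp(x,c) ≠ ∅}; (2) for every slice s of a, the multisets {{(stp(s,c), f(c)) : c ∈ S⁻¹(s)}} and {{(stp(π_S(s),d), f(d)) : d ∈ S⁻¹(π_S(s))}} are equal, where S⁻¹(t) := {c ∈ τ(A) : t is a slice of c}. -/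
/-- A finite relational structure over signature `S` with universe `V`. -/
structure FStruct (S : Type*) (V : Type*) where
  rel : S → Finset (List V)

/-- The set of all tuples of the structure. -/
def FStruct.tuples {S V : Type*} [Fintype S] [DecidableEq V] (A : FStruct S V) :
    Finset (List V) :=
  Finset.univ.biUnion A.rel

namespace Stmt16Aux

open scoped Classical

variable {V : Type*}

def supp (T : Set (ℕ × ℕ)) : Set ℕ := {i | ∃ j, (i, j) ∈ T}

def comp (R T : Set (ℕ × ℕ)) : Set (ℕ × ℕ) := {p | ∃ i, (i, p.1) ∈ R ∧ (i, p.2) ∈ T}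

def recov (R U : Set (ℕ × ℕ)) : Set (ℕ × ℕ) := {p | ∃ k, (p.1, k) ∈ R ∧ (k, p.2) ∈ U}

lemma mem_stpL {x y : List V} {p : ℕ × ℕ} :
    p ∈ stpL x y ↔ ∃ (h1 : p.1 < x.length) (h2 : p.2 < y.length), x[p.1] = y[p.2] := Iff.rfl

lemma mem_stpL' {x y : List V} {i j : ℕ} :
    (i, j) ∈ stpL x y ↔ ∃ (h1 : i < x.length) (h2 : j < y.length), x[i] = y[j] := Iff.rfl

lemma mem_supp_stpL {x y : List V} {i : ℕ} :
    i ∈ supp (stpL x y) ↔ ∃ h : i < x.length, x[i] ∈ y := by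
  constructor
  · rintro ⟨j, h1, h2, h3⟩
    have h3' : x[i] = y[j] := h3
    exact ⟨h1, h3' ▸ List.getElem_mem h2⟩
  · rintro ⟨h1, h2⟩
    obtain ⟨j, hj, hje⟩ := List.getElem_of_mem h2
    exact ⟨j, mem_stpL'.2 ⟨h1, hj, hje.symm⟩⟩

lemma diag_mem_stpL {x : List V} {i : ℕ} : (i, i) ∈ stpL x x ↔ i < x.length := by
  constructor
  · rintro ⟨h1, _, _⟩; exact h1
  · intro h; exact mem_stpL'.2 ⟨h, h, rfl⟩

lemma length_eq_of_stpL {x y : List V} (h : stpL x x = stpL y y) : x.length = y.length := by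
  by_contra hne
  rcases Nat.lt_or_ge x.length y.length with hlt | hge
  · have : (x.length, x.length) ∈ stpL y y := diag_mem_stpL.2 hlt
    rw [← h] at this
    exact absurd (diag_mem_stpL.1 this) (lt_irrefl _)
  · have hlt : y.length < x.length := lt_of_le_of_ne hge (fun e => hne e.symm)
    have : (y.length, y.length) ∈ stpL x x := diag_mem_stpL.2 hlt
    rw [h] at this
    exact absurd (diag_mem_stpL.1 this) (lt_irrefl _)

lemma stpL_slice {s x c : List V} (hs : sliceOf s x) :
    stpL s c = comp (stpL x s) (stpL x c) := by
  ext ⟨k, j⟩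
  simp only [comp, Set.mem_setOf_eq, mem_stpL']
  constructor
  · rintro ⟨hk, hj, he⟩
    have hmem : s[k] ∈ x := hs.2.2 _ (List.getElem_mem hk)
    obtain ⟨i, hi, hie⟩ := List.getElem_of_mem hmem
    exact ⟨i, ⟨hi, hk, hie⟩, ⟨hi, hj, hie ▸ he⟩⟩
  · rintro ⟨i, ⟨hi, hk, he1⟩, hi', hj, he2⟩
    exact ⟨hk, hj, he1 ▸ he2⟩

lemma sliceOf_iff_supp {s x c : List V} (hs : sliceOf s x) :
    sliceOf s c ↔ supp (stpL x s) ⊆ supp (stpL x c) := by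
  constructor
  · rintro ⟨-, -, hmem⟩ i hi
    obtain ⟨h1, h2⟩ := mem_supp_stpL.1 hi
    exact mem_supp_stpL.2 ⟨h1, hmem _ h2⟩
  · intro hsub
    refine ⟨hs.1, hs.2.1, fun e he => ?_⟩
    obtain ⟨j, hj, hje⟩ := List.getElem_of_mem (hs.2.2 _ he)
    have : j ∈ supp (stpL x s) := mem_supp_stpL.2 ⟨hj, hje ▸ he⟩
    obtain ⟨h1, h2⟩ := mem_supp_stpL.1 (hsub this)
    exact hje ▸ h2

lemma stpL_nonempty_of_sliceOf {s x c : List V} (hs : sliceOf s x) (hc : sliceOf s c) :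
    (stpL x c).Nonempty := by
  obtain ⟨e, he⟩ := List.exists_mem_of_ne_nil s hs.1
  obtain ⟨i, hi, hie⟩ := List.getElem_of_mem (hs.2.2 _ he)
  obtain ⟨j, hj, hje⟩ := List.getElem_of_mem (hc.2.2 _ he)
  exact ⟨(i, j), mem_stpL'.2 ⟨hi, hj, by rw [hie, hje]⟩⟩

lemma recov_comp {s x c : List V} (hs : sliceOf s x)
    (hsupp : supp (stpL x c) ⊆ supp (stpL x s)) :
    recov (stpL x s) (comp (stpL x s) (stpL x c)) = stpL x c := by
  rw [← stpL_slice hs]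
  ext ⟨i, j⟩
  simp only [recov, Set.mem_setOf_eq, mem_stpL']
  constructor
  · rintro ⟨k, ⟨hi, hk, he1⟩, hk', hj, he2⟩
    exact ⟨hi, hj, he1 ▸ he2⟩
  · rintro ⟨hi, hj, he⟩
    have : i ∈ supp (stpL x c) := ⟨j, mem_stpL'.2 ⟨hi, hj, he⟩⟩
    obtain ⟨k, hks⟩ := hsupp this
    obtain ⟨hi', hk, hke⟩ := mem_stpL'.1 hks
    exact ⟨k, ⟨hi', hk, hke⟩, ⟨hk, hj, hke ▸ he⟩⟩


lemma exists_slice [DecidableEq V] (a : List V) (I : Finset ℕ) (hne : I.Nonempty)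
    (hsub : ∀ i ∈ I, i < a.length)
    (hcl : ∀ i ∈ I, ∀ i', (i', i) ∈ stpL a a → i' ∈ I) :
    ∃ s, sliceOf s a ∧ supp (stpL a s) = ↑I := by
  classical
  set J : Finset V :=
    ((Finset.univ : Finset (Fin a.length)).filter (fun i : Fin a.length => (i : ℕ) ∈ I)).image
      (fun i => a.get i) with hJ
  refine ⟨a.dedup.filter (fun e => decide (e ∈ J)), ⟨?_, ?_, ?_⟩, ?_⟩
  · obtain ⟨i0, hi0⟩ := hne
    have h0 : i0 < a.length := hsub _ hi0
    have hmem : a[i0] ∈ a.dedup.filter (fun e => decide (e ∈ J)) := by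
      rw [List.mem_filter]
      refine ⟨List.mem_dedup.2 (List.getElem_mem h0), ?_⟩
      simp only [decide_eq_true_eq, hJ, Finset.mem_image]
      exact ⟨⟨i0, h0⟩, Finset.mem_filter.2 ⟨Finset.mem_univ _, hi0⟩, rfl⟩
    exact List.ne_nil_of_mem hmem
  · exact List.Nodup.filter _ a.nodup_dedup
  · intro e he
    exact List.mem_dedup.1 (List.mem_filter.1 he).1
  · ext i
    simp only [mem_supp_stpL, Finset.coe_filter, Set.mem_setOf_eq, List.mem_filter,
      List.mem_dedup, decide_eq_true_eq, Finset.mem_coe]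
    constructor
    · rintro ⟨hi, -, hiJ⟩
      rw [hJ] at hiJ
      simp only [Finset.mem_image, Finset.mem_filter, Finset.mem_univ, true_and] at hiJ
      obtain ⟨i', hi'I, hi'e⟩ := hiJ
      refine hcl _ hi'I i (mem_stpL'.2 ⟨hi, i'.isLt, ?_⟩)
      exact hi'e.symm
    · intro hiI
      have hi : i < a.length := hsub _ hiI
      refine ⟨hi, List.getElem_mem hi, ?_⟩
      rw [hJ]
      simp only [Finset.mem_image, Finset.mem_filter, Finset.mem_univ, true_and]
      exact ⟨⟨i, hi⟩, hiI, rfl⟩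

lemma key_E {C : Type*} (f : List V → C) (M : Multiset (List V)) {s x : List V}
    (hs : sliceOf s x) :
    (M.filter (fun c => sliceOf s c)).map (fun c => (stpL s c, f c)) =
    (((M.filter (fun c => (stpL x c).Nonempty)).map (fun c => (stpL x c, f c))).filter
        (fun z => supp (stpL x s) ⊆ supp z.1)).map
      (fun z => (comp (stpL x s) z.1, z.2)) := by
  classical
  induction M using Multiset.induction_on with
  | empty => simp
  | cons c M ih =>
    by_cases hc : sliceOf s c
    · have h1 : (stpL x c).Nonempty := stpL_nonempty_of_sliceOf hs hc
      have h2 : supp (stpL x s) ⊆ supp (stpL x c) := (sliceOf_iff_supp hs).1 hc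
      rw [Multiset.filter_cons_of_pos _ hc, Multiset.filter_cons_of_pos (p := fun c => (stpL x c).Nonempty) M h1,
        Multiset.map_cons, Multiset.map_cons, Multiset.filter_cons_of_pos (p := fun z : Set (ℕ × ℕ) × C => supp (stpL x s) ⊆ supp z.1) (a := (stpL x c, f c)) _ h2,
        Multiset.map_cons, ih, ← stpL_slice hs]
    · by_cases h1 : (stpL x c).Nonempty
      · have h2 : ¬ supp (stpL x s) ⊆ supp (stpL x c) := fun h => hc ((sliceOf_iff_supp hs).2 h)
        rw [Multiset.filter_cons_of_neg _ hc, Multiset.filter_cons_of_pos (p := fun c => (stpL x c).Nonempty) M h1,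
          Multiset.map_cons, Multiset.filter_cons_of_neg (p := fun z : Set (ℕ × ℕ) × C => supp (stpL x s) ⊆ supp z.1) (a := (stpL x c, f c)) _ h2, ih]
      · rw [Multiset.filter_cons_of_neg _ hc, Multiset.filter_cons_of_neg (p := fun c => (stpL x c).Nonempty) M h1, ih]

end Stmt16Aux

open Stmt16Aux

open Classical in
/-- Equivalence of the neighborhood multiset condition over tuples and the
slice-wise neighborhood multiset condition (Lemma `vgrep-equiv-rcr`):
for tuples `a, b` with `f(a) = f(b)` and `stp(a,a) = stp(b,b)`, and the (unique)
bijection `π` between their slices preserving similarity types, the multiset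
`{{(stp(a,c), f(c)) : c ∈ N(a)}}` equals `{{(stp(b,c), f(c)) : c ∈ N(b)}}`
iff for every slice `s` of `a` the multisets over `S⁻¹(s)` and `S⁻¹(π(s))` agree. -/
theorem stmt16 {S V C : Type*} [Fintype S] [DecidableEq V]
    (A : FStruct S V) (f : List V → C)
    (a b : List V) (ha : a ∈ A.tuples) (hb : b ∈ A.tuples)
    (hf : f a = f b) (hstp : stpL a a = stpL b b)
    (π : {s : List V // sliceOf s a} → {s : List V // sliceOf s b})
    (hbij : Function.Bijective π)
    (hπ : ∀ s, stpL a s.val = stpL b (π s).val) :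
    (((A.tuples.filter fun c => (stpL a c).Nonempty).val.map fun c => (stpL a c, f c)) =
     ((A.tuples.filter fun c => (stpL b c).Nonempty).val.map fun c => (stpL b c, f c)))
    ↔
    (∀ s : {s : List V // sliceOf s a},
      ((A.tuples.filter fun c => sliceOf s.val c).val.map fun c => (stpL s.val c, f c)) =
      ((A.tuples.filter fun c => sliceOf (π s).val c).val.map
        fun c => (stpL (π s).val c, f c))) := by
  classical
  simp only [Finset.filter_val]
  set n := a.length with hn
  have hlen : b.length = a.length := (length_eq_of_stpL hstp).symm
  set Ma : Multiset (List V) := A.tuples.val with hMa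
  set La := (Ma.filter (fun c => (stpL a c).Nonempty)).map (fun c => (stpL a c, f c)) with hLa
  set Lb := (Ma.filter (fun c => (stpL b c).Nonempty)).map (fun c => (stpL b c, f c)) with hLb
  constructor
  · -- forward
    intro hLab s
    obtain ⟨s, hs⟩ := s
    have h1 : (Ma.filter (fun c => sliceOf s c)).map (fun c => (stpL s c, f c)) =
        (La.filter (fun z => supp (stpL a s) ⊆ supp z.1)).map
          (fun z => (comp (stpL a s) z.1, z.2)) := key_E f Ma hs
    have h2 : (Ma.filter (fun c => sliceOf (π ⟨s, hs⟩).val c)).map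
          (fun c => (stpL (π ⟨s, hs⟩).val c, f c)) =
        (Lb.filter (fun z => supp (stpL a s) ⊆ supp z.1)).map
          (fun z => (comp (stpL a s) z.1, z.2)) := by
      rw [show stpL a s = stpL b (π ⟨s, hs⟩).val from hπ ⟨s, hs⟩]
      exact key_E f Ma (π ⟨s, hs⟩).2
    refine h1.trans (Eq.trans ?_ h2.symm)
    rw [hLab]
  · -- backward
    intro hS
    have hmemA : ∀ z ∈ La, ∃ c, z.1 = stpL a c ∧ (stpL a c).Nonempty := by
      intro z hz
      rw [hLa] at hz
      obtain ⟨c, hc, rfl⟩ := Multiset.mem_map.1 hz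
      exact ⟨c, rfl, (Multiset.mem_filter.1 hc).2⟩
    have hmemB : ∀ z ∈ Lb, ∃ c, z.1 = stpL b c ∧ (stpL b c).Nonempty := by
      intro z hz
      rw [hLb] at hz
      obtain ⟨c, hc, rfl⟩ := Multiset.mem_map.1 hz
      exact ⟨c, rfl, (Multiset.mem_filter.1 hc).2⟩
    have hfacts : ∀ (T : Set (ℕ × ℕ)) (v : C), ((T, v) ∈ La ∨ (T, v) ∈ Lb) →
        (supp T).Nonempty ∧ (∀ i ∈ supp T, i < n) ∧
          (∀ i ∈ supp T, ∀ i', (i', i) ∈ stpL a a → i' ∈ supp T) := by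
      intro T v h
      rcases h with h | h
      · obtain ⟨c, hc1, hc2⟩ := hmemA _ h
        have hc1' : T = stpL a c := hc1
        subst hc1'
        refine ⟨?_, ?_, ?_⟩
        · obtain ⟨⟨i, j⟩, hij⟩ := hc2
          exact ⟨i, j, hij⟩
        · intro i hi
          obtain ⟨h1, -⟩ := mem_supp_stpL.1 hi
          exact h1
        · intro i hi i' hii'
          obtain ⟨h1, hmem⟩ := mem_supp_stpL.1 hi
          obtain ⟨h1', h2', he⟩ := mem_stpL'.1 hii'
          exact mem_supp_stpL.2 ⟨h1', by rw [he]; exact hmem⟩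
      · obtain ⟨c, hc1, hc2⟩ := hmemB _ h
        have hc1' : T = stpL b c := hc1
        subst hc1'
        refine ⟨?_, ?_, ?_⟩
        · obtain ⟨⟨i, j⟩, hij⟩ := hc2
          exact ⟨i, j, hij⟩
        · intro i hi
          obtain ⟨h1, -⟩ := mem_supp_stpL.1 hi
          rw [hlen] at h1
          exact h1
        · intro i hi i' hii'
          rw [hstp] at hii'
          obtain ⟨h1, hmem⟩ := mem_supp_stpL.1 hi
          obtain ⟨h1', h2', he⟩ := mem_stpL'.1 hii'
          exact mem_supp_stpL.2 ⟨h1', by rw [he]; exact hmem⟩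
    have hIcoe : ∀ T : Set (ℕ × ℕ), (∀ i ∈ supp T, i < n) →
        (((Finset.range n).filter (fun i => i ∈ supp T) : Finset ℕ) : Set ℕ) = supp T := by
      intro T hsub
      ext i
      simp only [Finset.coe_filter, Finset.mem_range, Set.mem_setOf_eq]
      exact ⟨fun h => h.2, fun h => ⟨hsub _ h, h⟩⟩
    have main : ∀ k (T : Set (ℕ × ℕ)) (v : C),
        n ≤ k + ((Finset.range n).filter (fun i => i ∈ supp T)).card →
        La.count (T, v) = Lb.count (T, v) := by
      intro k
      induction k using Nat.strong_induction_on with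
      | _ k IH =>
        intro T v hcard
        by_cases hreal : (T, v) ∈ La ∨ (T, v) ∈ Lb
        swap
        · push_neg at hreal
          rw [Multiset.count_eq_zero_of_notMem hreal.1,
            Multiset.count_eq_zero_of_notMem hreal.2]
        obtain ⟨hTne, hTsub, hTcl⟩ := hfacts T v hreal
        set I := (Finset.range n).filter (fun i => i ∈ supp T) with hI
        have hIco : (I : Set ℕ) = supp T := hIcoe T hTsub
        have hIne : I.Nonempty := by
          obtain ⟨i, hi⟩ := hTne
          exact ⟨i, Finset.mem_filter.2 ⟨Finset.mem_range.2 (hTsub _ hi), hi⟩⟩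
        have hIsub : ∀ i ∈ I, i < a.length := by
          intro i hi
          exact Finset.mem_range.1 (Finset.mem_filter.1 hi).1
        have hIcl : ∀ i ∈ I, ∀ i', (i', i) ∈ stpL a a → i' ∈ I := by
          intro i hi i' hii'
          have hmem := hTcl i (Finset.mem_filter.1 hi).2 i' hii'
          exact Finset.mem_filter.2 ⟨Finset.mem_range.2 (hTsub _ hmem), hmem⟩
        obtain ⟨s, hs, hsupp⟩ := exists_slice a I hIne hIsub hIcl
        have hRT : supp (stpL a s) = supp T := by rw [hsupp, hIco]
        -- the slice-wise hypothesis in E-form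
        have h1 : (Ma.filter (fun c => sliceOf s c)).map (fun c => (stpL s c, f c)) =
            (La.filter (fun z => supp (stpL a s) ⊆ supp z.1)).map
              (fun z => (comp (stpL a s) z.1, z.2)) := key_E f Ma hs
        have h2 : (Ma.filter (fun c => sliceOf (π ⟨s, hs⟩).val c)).map
              (fun c => (stpL (π ⟨s, hs⟩).val c, f c)) =
            (Lb.filter (fun z => supp (stpL a s) ⊆ supp z.1)).map
              (fun z => (comp (stpL a s) z.1, z.2)) := by
          rw [show stpL a s = stpL b (π ⟨s, hs⟩).val from hπ ⟨s, hs⟩]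
          exact key_E f Ma (π ⟨s, hs⟩).2
        have hE : (La.filter (fun z => supp (stpL a s) ⊆ supp z.1)).map
              (fun z => (comp (stpL a s) z.1, z.2)) =
            (Lb.filter (fun z => supp (stpL a s) ⊆ supp z.1)).map
              (fun z => (comp (stpL a s) z.1, z.2)) :=
          h1.symm.trans ((hS ⟨s, hs⟩).trans h2)
        -- recovery of T
        have hTrec : recov (stpL a s) (comp (stpL a s) T) = T := by
          rcases hreal with h | h
          · obtain ⟨c, hc1, -⟩ := hmemA _ h
            have hc1' : T = stpL a c := hc1
            rw [hc1'] at hRT ⊢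
            exact recov_comp hs (by rw [hRT])
          · obtain ⟨d, hc1, -⟩ := hmemB _ h
            have hc1' : T = stpL b d := hc1
            have hRb : stpL a s = stpL b (π ⟨s, hs⟩).val := hπ ⟨s, hs⟩
            rw [hc1'] at hRT ⊢
            rw [hRb]
            exact recov_comp (π ⟨s, hs⟩).2 (by rw [← hRb, hRT])
        have hinj : ∀ z : Set (ℕ × ℕ) × C, (z ∈ La ∨ z ∈ Lb) →
            supp z.1 = supp (stpL a s) →
            (comp (stpL a s) z.1, z.2) = (comp (stpL a s) T, v) → z = (T, v) := by
          intro z hz hsz hgz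
          have hg1 : comp (stpL a s) z.1 = comp (stpL a s) T := congrArg Prod.fst hgz
          have hg2 : z.2 = v := congrArg Prod.snd hgz
          have hrec : recov (stpL a s) (comp (stpL a s) z.1) = z.1 := by
            rcases hz with h | h
            · obtain ⟨c, hc1, -⟩ := hmemA _ h
              rw [hc1]
              exact recov_comp hs (by rw [← hc1, hsz])
            · obtain ⟨d, hc1, -⟩ := hmemB _ h
              have hRb : stpL a s = stpL b (π ⟨s, hs⟩).val := hπ ⟨s, hs⟩
              rw [hc1, hRb]
              exact recov_comp (π ⟨s, hs⟩).2 (by rw [← hRb, ← hc1, hsz])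
          have hz1 : z.1 = T := by rw [← hrec, hg1, hTrec]
          exact Prod.ext hz1 hg2
        -- count splitting
        have hsplitcount : ∀ L : Multiset (Set (ℕ × ℕ) × C),
            (∀ z ∈ L, z ∈ La ∨ z ∈ Lb) →
            ((L.filter (fun z => supp (stpL a s) ⊆ supp z.1)).map
                (fun z => (comp (stpL a s) z.1, z.2))).count (comp (stpL a s) T, v) =
            L.count (T, v) +
            ((L.filter (fun z => supp (stpL a s) ⊆ supp z.1 ∧
                supp z.1 ≠ supp (stpL a s))).map
                (fun z => (comp (stpL a s) z.1, z.2))).count (comp (stpL a s) T, v) := by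
          intro L hL
          have hdec : L.filter (fun z => supp (stpL a s) ⊆ supp z.1) =
              L.filter (fun z => supp z.1 = supp (stpL a s)) +
              L.filter (fun z => supp (stpL a s) ⊆ supp z.1 ∧
                supp z.1 ≠ supp (stpL a s)) := by
            rw [← Multiset.filter_add_not (fun z => supp z.1 = supp (stpL a s))
                  (L.filter (fun z => supp (stpL a s) ⊆ supp z.1)),
                Multiset.filter_filter, Multiset.filter_filter]
            congr 1
            · refine Multiset.filter_congr fun z _ => ?_
              constructor
              · rintro ⟨hh, -⟩; exact hh
              · intro hh; exact ⟨hh, by rw [hh]⟩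
            · refine Multiset.filter_congr fun z _ => ?_
              tauto
          rw [hdec, Multiset.map_add, Multiset.count_add]
          congr 1
          rw [Multiset.count_map]
          have hfc : (L.filter (fun z => supp z.1 = supp (stpL a s))).filter
                (fun z => (comp (stpL a s) T, v) = (comp (stpL a s) z.1, z.2)) =
              (L.filter (fun z => supp z.1 = supp (stpL a s))).filter
                (fun z => (T, v) = z) := by
            refine Multiset.filter_congr fun z hz => ?_
            have hz' := Multiset.mem_filter.1 hz
            constructor
            · intro hh
              exact (hinj z (hL z hz'.1) hz'.2 hh.symm).symm
            · intro hh
              rw [← hh]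
          rw [hfc, ← Multiset.count_eq_card_filter_eq,
            Multiset.count_filter_of_pos (by exact hRT.symm)]
        have hcA := hsplitcount La (fun z hz => Or.inl hz)
        have hcB := hsplitcount Lb (fun z hz => Or.inr hz)
        have hQgt : La.filter (fun z => supp (stpL a s) ⊆ supp z.1 ∧
              supp z.1 ≠ supp (stpL a s)) =
            Lb.filter (fun z => supp (stpL a s) ⊆ supp z.1 ∧
              supp z.1 ≠ supp (stpL a s)) := by
          refine Multiset.ext.2 fun z => ?_
          obtain ⟨T', v'⟩ := z
          rw [Multiset.count_filter, Multiset.count_filter]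
          split_ifs with hq
          · by_cases hz : (T', v') ∈ La ∨ (T', v') ∈ Lb
            · obtain ⟨-, hTsub', -⟩ := hfacts T' v' hz
              have hIco' := hIcoe T' hTsub'
              have hss : I ⊂ (Finset.range n).filter (fun i => i ∈ supp T') := by
                rw [← Finset.coe_ssubset, hIco, hIco', ← hRT]
                exact ⟨hq.1, fun hcon => hq.2 (le_antisymm (hRT ▸ hq.1) hcon |>.symm ▸ rfl)⟩
              have hlt : I.card < ((Finset.range n).filter (fun i => i ∈ supp T')).card :=
                Finset.card_lt_card hss
              have hle : ((Finset.range n).filter (fun i => i ∈ supp T')).card ≤ n := by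
                refine le_trans (Finset.card_filter_le _ _) ?_
                rw [Finset.card_range]
              rcases k with _ | k'
              · exfalso; omega
              · exact IH k' (Nat.lt_succ_self k') T' v' (by omega)
            · push_neg at hz
              rw [Multiset.count_eq_zero_of_notMem hz.1,
                Multiset.count_eq_zero_of_notMem hz.2]
          · rfl
        rw [hE, hQgt] at hcA
        omega
    refine Multiset.ext.2 fun z => ?_
    obtain ⟨T, v⟩ := z
    exact main n T v (Nat.le_add_right n _)
end

section
/- Let a ∈ V^k and b ∈ V^{k'} with stp(a,a) = stp(b,b), let π_S : S(a) → S(b) be the bijection with stp(a,s) = stp(b,π_S(s)) for all slices s of a, and suppose c, d ∈ V^* are tuples with stp(a,c) = stp(b,d). Then for every slice s of a that is also a slice of c, the slice t := π_S(s) is a slice of d, and stp(s,c) = stp(t,d). -/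
/-! If every entry of `s` occurs in `a`, then `stp(s, c)` is the relational composite of
`stp(a, s)ᵀ` and `stp(a, c)`: the `j`-th entry of `s` equals `c_p` iff some `a_i` equals both.
So `stp(a, s)` and `stp(a, c)` determine `stp(s, c)`, and with it whether `s` is contained
in `c`. -/

namespace stpL

variable {V : Type*}

theorem mem_iff {x y : List V} {i j : ℕ} :
    (i, j) ∈ stpL x y ↔ ∃ (h1 : i < x.length) (h2 : j < y.length),
      x.get ⟨i, h1⟩ = y.get ⟨j, h2⟩ := Iff.rfl

theorem exists_mem_of_subset {a s : List V} (hs : s ⊆ a) {j : ℕ} (hj : j < s.length) :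
    ∃ i, (i, j) ∈ stpL a s := by
  obtain ⟨⟨i, hi⟩, hai⟩ := List.mem_iff_get.mp (hs (List.get_mem s ⟨j, hj⟩))
  exact ⟨i, hi, hj, hai⟩

theorem subset_iff {s c : List V} :
    s ⊆ c ↔ ∀ j < s.length, ∃ p, (j, p) ∈ stpL s c := by
  constructor
  · intro hs j hj
    obtain ⟨⟨p, hp⟩, hcp⟩ := List.mem_iff_get.mp (hs (List.get_mem s ⟨j, hj⟩))
    exact ⟨p, hj, hp, hcp.symm⟩
  · intro h x hx
    obtain ⟨⟨j, hj⟩, rfl⟩ := List.mem_iff_get.mp hx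
    obtain ⟨p, hpj⟩ := h j hj
    obtain ⟨_, hp, hsc⟩ := mem_iff.mp hpj
    exact hsc ▸ List.get_mem c ⟨p, hp⟩

theorem mem_iff_exists_of_subset {a s c : List V} (hs : s ⊆ a) {j p : ℕ} :
    (j, p) ∈ stpL s c ↔ ∃ i, (i, j) ∈ stpL a s ∧ (i, p) ∈ stpL a c := by
  simp only [mem_iff]
  constructor
  · rintro ⟨hj, hp, hsc⟩
    obtain ⟨i, hias⟩ := exists_mem_of_subset hs hj
    obtain ⟨hi, _, has⟩ := mem_iff.mp hias
    exact ⟨i, ⟨hi, hj, has⟩, ⟨hi, hp, has.trans hsc⟩⟩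
  · rintro ⟨i, ⟨hi, hj, has⟩, ⟨_, hp, hac⟩⟩
    exact ⟨hj, hp, has.symm.trans hac⟩

theorem eq_of_subset {a b s t c d : List V} (hs : s ⊆ a) (ht : t ⊆ b)
    (hst : stpL a s = stpL b t) (hcd : stpL a c = stpL b d) :
    stpL s c = stpL t d := by
  ext ⟨j, p⟩
  rw [mem_iff_exists_of_subset hs, mem_iff_exists_of_subset ht, hst, hcd]

theorem subset_of_eq {a b s t c d : List V} (ht : t ⊆ b)
    (hst : stpL a s = stpL b t) (hsctd : stpL s c = stpL t d) (hsc : s ⊆ c) :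
    t ⊆ d := by
  refine subset_iff.mpr fun j hj => ?_
  obtain ⟨i, hij⟩ := exists_mem_of_subset ht hj
  rw [← hst] at hij
  rw [← hsctd]
  exact subset_iff.mp hsc j hij.2.1

end stpL

theorem stmt17_general {V : Type*} (a b c d : List V)
    (π : {s : List V // sliceOf s a} → {s : List V // sliceOf s b})
    (hπ : ∀ s, stpL a s.val = stpL b (π s).val)
    (hcd : stpL a c = stpL b d) :
    ∀ s : {s : List V // sliceOf s a}, sliceOf s.val c →
      sliceOf (π s).val d ∧ stpL s.val c = stpL (π s).val d := by
  rintro s ⟨-, -, hsc⟩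
  obtain ⟨hne, hnd, htb⟩ := (π s).2
  have hst := stpL.eq_of_subset s.2.2.2 htb (hπ s) hcd
  exact ⟨⟨hne, hnd, stpL.subset_of_eq htb (hπ s) hst hsc⟩, hst⟩

/-- If `stp(a,a) = stp(b,b)`, `π` is the bijection between slices of `a` and slices of `b`
with `stp(a,s) = stp(b,π(s))`, and `c, d` are tuples with `stp(a,c) = stp(b,d)`, then for
every slice `s` of `a` that is also a slice of `c`, the slice `t := π(s)` is a slice of `d`
and `stp(s,c) = stp(t,d)`. -/
theorem stmt17 {V : Type*} (a b c d : List V)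
    (hab : stpL a a = stpL b b)
    (π : {s : List V // sliceOf s a} → {s : List V // sliceOf s b})
    (hbij : Function.Bijective π)
    (hπ : ∀ s, stpL a s.val = stpL b (π s).val)
    (hcd : stpL a c = stpL b d) :
    ∀ s : {s : List V // sliceOf s a}, sliceOf s.val c →
      sliceOf (π s).val d ∧ stpL s.val c = stpL (π s).val d :=
  stmt17_general a b c d π hπ hcd
end
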